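/- arXiv:2108.13745 — 3 statements merged into one kernel-verified Lean document; each statement's English description precedes it below -/
import Mathlib

section
/- Let M be a (possibly infinite) matroid on ground set E. There exists a finitary matroid M^fin on the same ground set E whose circuits are exactly the finite circuits of M; moreover, the identity map on E is a strong map from M^fin to M, i.e., cl_{M^fin}(A) ⊆ cl_M(A) for every A ⊆ E. -/
/-- A circuit of a (possibly infinite) matroid is a minimal dependent set. -/
def Matroid.Circuit' {α : Type*} (M : Matroid α) (C : Set α) : Prop := Minimal M.Dep C

/-!
Call a subset of `M.E` independent in `M.finitize` when all of its finite subsets are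
`M`-independent. This predicate is compact and agrees with `M.Indep` on finite sets, where the
augmentation axiom is inherited from `M`; so it defines a finitary matroid with the same finite
independent sets, hence the same finite circuits, as `M`. Each circuit of `M.finitize` is then a
circuit of `M`, and closure is witnessed by circuits, which gives the strong map.
-/

open Set

namespace Matroid

variable {α : Type*} {M : Matroid α} {I X C : Set α}

def finitize (M : Matroid α) : Matroid α :=
  (IndepMatroid.ofFinitaryCardAugment M.E (fun I ↦ I ⊆ M.E ∧ ∀ J ⊆ I, J.Finite → M.Indep J)
    ⟨empty_subset _, fun J hJ _ ↦ M.empty_indep.subset hJ⟩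
    (fun I J hJ hIJ ↦ ⟨hIJ.trans hJ.1, fun K hKI hK ↦ hJ.2 K (hKI.trans hIJ) hK⟩)
    (fun I J hI hIfin hJ hJfin hlt ↦ by
      obtain ⟨e, ⟨heJ, heI⟩, hins⟩ := (hI.2 I subset_rfl hIfin).augment (hJ.2 J subset_rfl hJfin)
        (by rwa [← hIfin.cast_ncard_eq, ← hJfin.cast_ncard_eq, Nat.cast_lt])
      exact ⟨e, heJ, heI, hins.subset_ground, fun K hK _ ↦ hins.subset hK⟩)
    (fun I h ↦ ⟨fun e he ↦ (h {e} (singleton_subset_iff.2 he) (finite_singleton e)).1 rfl,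
      fun J hJI hJ ↦ (h J hJI hJ).2 J subset_rfl hJ⟩)
    (fun _ hI ↦ hI.1)).matroid

@[simp] lemma finitize_ground_eq : M.finitize.E = M.E := rfl

instance finitize_finitary : M.finitize.Finitary := by
  unfold finitize
  infer_instance

lemma finitize_indep_iff_of_finite (hI : I.Finite) : M.finitize.Indep I ↔ M.Indep I :=
  ⟨fun h ↦ h.2 I subset_rfl hI, fun h ↦ ⟨h.subset_ground, fun _ hJ _ ↦ h.subset hJ⟩⟩

lemma finitize_dep_iff_of_finite (hX : X.Finite) : M.finitize.Dep X ↔ M.Dep X := by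
  rw [Dep, Dep, finitize_indep_iff_of_finite hX, finitize_ground_eq]

lemma finitize_isCircuit_iff : M.finitize.IsCircuit C ↔ M.IsCircuit C ∧ C.Finite := by
  refine ⟨fun hC ↦ ⟨?_, hC.finite⟩, fun ⟨hC, hCfin⟩ ↦ ?_⟩
  · refine isCircuit_iff_forall_ssubset.2
      ⟨(finitize_dep_iff_of_finite hC.finite).1 hC.dep, fun I hIC ↦ ?_⟩
    exact (finitize_indep_iff_of_finite (hC.finite.subset hIC.subset)).1 (hC.ssubset_indep hIC)
  · refine isCircuit_iff_forall_ssubset.2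
      ⟨(finitize_dep_iff_of_finite hCfin).2 hC.dep, fun I hIC ↦ ?_⟩
    exact (finitize_indep_iff_of_finite (hCfin.subset hIC.subset)).2 (hC.ssubset_indep hIC)

lemma finitize_closure_subset (M : Matroid α) (X : Set α) :
    M.finitize.closure X ⊆ M.closure X := by
  intro e he
  by_cases heX : e ∈ X
  · exact M.mem_closure_of_mem' heX (M.finitize.closure_subset_ground X he)
  obtain ⟨C, hCX, hC, heC⟩ := exists_isCircuit_of_mem_closure he heX
  exact M.closure_subset_closure (by simpa using hCX)
    ((finitize_isCircuit_iff.1 hC).1.mem_closure_sdiff_singleton_of_mem heC)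

end Matroid

/-- For every (possibly infinite) matroid `M`, there is a finitary
matroid `M^fin` on the same ground set whose circuits are exactly the finite circuits of
`M`; moreover the identity map is a strong map `M^fin → M`, i.e.
`M^fin.closure A ⊆ M.closure A` for every `A ⊆ M.E`. -/
theorem exists_finitization {α : Type*} (M : Matroid α) :
    ∃ N : Matroid α, N.E = M.E ∧ N.Finitary ∧
      (∀ C, N.Circuit' C ↔ (M.Circuit' C ∧ C.Finite)) ∧
      ∀ A ⊆ M.E, N.closure A ⊆ M.closure A :=
  ⟨M.finitize, M.finitize_ground_eq, M.finitize_finitary, fun _ ↦ Matroid.finitize_isCircuit_iff,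
    fun A _ ↦ M.finitize_closure_subset A⟩
end

section
/- Let M and N be (possibly infinite) matroids and let f : E(M) → E(N) be a strong map, i.e., f(cl_M(A)) ⊆ cl_N(f(A)) for all A ⊆ E(M). Let M^fin and N^fin be the finitary matroids on E(M) and E(N) whose circuits are exactly the finite circuits of M and of N, respectively. Then f is also a strong map from M^fin to N^fin; that is, f(cl_{M^fin}(A)) ⊆ cl_{N^fin}(f(A)) for all A ⊆ E(M). -/
open Set

namespace Matroid

variable {α : Type*}

lemma circuit'_iff_isCircuit {M : Matroid α} {C : Set α} : M.Circuit' C ↔ M.IsCircuit C :=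
  Iff.rfl

lemma closure_subset_closure_of_isCircuit_of_finite {M M' : Matroid α} {X : Set α}
    (hE : M.E ⊆ M'.E) (hC : ∀ C, M.IsCircuit C → C.Finite → M'.IsCircuit C) (hX : X.Finite) :
    M.closure X ⊆ M'.closure X := by
  intro e he
  by_cases heX : e ∈ X
  · exact M'.mem_closure_of_mem' heX (hE (M.closure_subset_ground X he))
  obtain ⟨C, hCX, hCcirc, heC⟩ := exists_isCircuit_of_mem_closure he heX
  have hCfin : C.Finite := (hX.insert e).subset hCX
  exact (mem_closure_iff_exists_isCircuit heX).2 ⟨C, hCX, hC C hCcirc hCfin, heC⟩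

end Matroid

theorem strong_map_finitization_general {α β : Type*} (M : Matroid α) (N : Matroid β)
    (f : α → β)
    (hstrong : ∀ A ⊆ M.E, f '' M.closure A ⊆ N.closure (f '' A))
    (Mfin : Matroid α) (hME : Mfin.E = M.E) (hMfin : Mfin.Finitary)
    (hMC : ∀ C, Mfin.Circuit' C ↔ (M.Circuit' C ∧ C.Finite))
    (Nfin : Matroid β) (hNE : Nfin.E = N.E)
    (hNC : ∀ C, Nfin.Circuit' C ↔ (N.Circuit' C ∧ C.Finite)) :
    ∀ A ⊆ M.E, f '' Mfin.closure A ⊆ Nfin.closure (f '' A) := by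
  rintro A hA _ ⟨e, he, rfl⟩
  obtain ⟨F, hFA, hFfin, -, heF⟩ := Mfin.exists_mem_finite_closure_of_mem_closure he
  have heM : e ∈ M.closure F :=
    Matroid.closure_subset_closure_of_isCircuit_of_finite hME.subset
      (fun C hC _ ↦ Matroid.circuit'_iff_isCircuit.1 ((hMC C).1 hC).1) hFfin heF
  have hfeN : f e ∈ N.closure (f '' F) := hstrong F (hFA.trans hA) (mem_image_of_mem f heM)
  have hfeNfin : f e ∈ Nfin.closure (f '' F) :=
    Matroid.closure_subset_closure_of_isCircuit_of_finite hNE.symm.subset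
      (fun C hC hCfin ↦ Matroid.circuit'_iff_isCircuit.1 ((hNC C).2 ⟨hC, hCfin⟩))
      (hFfin.image f) hfeN
  exact Nfin.closure_mono (image_mono hFA) hfeNfin

/-- If `f` is a strong map `M → N`, and `M^fin`, `N^fin` are the finitary
matroids whose circuits are exactly the finite circuits of `M` and of `N`, then `f` is also
a strong map `M^fin → N^fin`. -/
theorem strong_map_finitization {α β : Type*} (M : Matroid α) (N : Matroid β)
    (f : α → β) (hf : Set.MapsTo f M.E N.E)
    (hstrong : ∀ A ⊆ M.E, f '' M.closure A ⊆ N.closure (f '' A))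
    (Mfin : Matroid α) (hME : Mfin.E = M.E) (hMfin : Mfin.Finitary)
    (hMC : ∀ C, Mfin.Circuit' C ↔ (M.Circuit' C ∧ C.Finite))
    (Nfin : Matroid β) (hNE : Nfin.E = N.E) (hNfin : Nfin.Finitary)
    (hNC : ∀ C, Nfin.Circuit' C ↔ (N.Circuit' C ∧ C.Finite)) :
    ∀ A ⊆ M.E, f '' Mfin.closure A ⊆ Nfin.closure (f '' A) :=
  strong_map_finitization_general M N f hstrong Mfin hME hMfin hMC Nfin hNE hNC
end

section
/- Let G be an additive commutative group and let f be a function assigning to each (possibly infinite) matroid on subsets of a fixed type an element of G, such that (i) f is invariant under matroid isomorphism, and (ii) f(M) = f(M \ e) + f(M / e) whenever e is an element of M that is neither a loop nor a coloop. Let E be an infinite set, let r ≥ 0 be an integer, and let U_r(E) be the finitary matroid on E whose circuits are exactly the subsets of E of cardinality r + 1. Then f(U_r(E)) = 0. -/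
open scoped Matroid

/-- `N` is the contraction `M / S`: the matroid on ground set `M.E \ S` whose circuits are
the nonempty, inclusion-wise minimal sets of the form `C \ S` with `C` a circuit of `M`. -/
def Matroid.IsContractionBy {α : Type*} (M : Matroid α) (S : Set α) (N : Matroid α) : Prop :=
  N.E = M.E \ S ∧
  ∀ C, N.Circuit' C ↔ Minimal (fun D => D.Nonempty ∧ ∃ C₀, M.Circuit' C₀ ∧ D = C₀ \ S) C

/-!
Deleting an element `e` from `U_{r+1}(E)` gives `U_{r+1}(E - e)` and contracting it gives
`U_r(E - e)`; here `e` is neither a loop (circuits have `r + 2` elements) nor a coloop (any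
`r + 1` elements of `E - e` form a base). Since `E` is infinite, `E - e` is equinumerous with
`E`, so `U_k(E - e) ≅ U_k(E)` for every `k`. The deletion–contraction relation at `e` therefore
reads `f U_{r+1}(E) = f U_{r+1}(E) + f U_r(E)`, whence `f U_r(E) = 0`.
-/

open Set Cardinal

lemma Cardinal.mk_sdiff_singleton_of_infinite {α : Type*} {E : Set α} (hE : E.Infinite) (e : α) :
    #(E \ {e} : Set α) = #E := by
  by_cases he : e ∈ E
  · have hE' : ℵ₀ ≤ #(E \ {e} : Set α) := infinite_iff.1 (hE.sdiff (finite_singleton e)).to_subtype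
    rw [← mk_sdiff_add_mk (singleton_subset_iff.2 he), mk_singleton, add_one_eq hE']
  · rw [sdiff_singleton_eq_self he]

lemma Set.exists_injOn_image_eq_of_mk_eq {α : Type*} {D E : Set α} (h : #D = #E) :
    ∃ g : α → α, InjOn g D ∧ g '' D = E := by
  classical
  obtain ⟨φ⟩ := Cardinal.eq.1 h
  refine ⟨fun x => if hx : x ∈ D then φ ⟨x, hx⟩ else x, fun x hx y hy hxy => ?_, ?_⟩
  · simp only [dif_pos hx, dif_pos hy] at hxy
    exact congrArg Subtype.val (φ.injective (Subtype.ext hxy))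
  · ext y
    refine ⟨?_, fun hy => ⟨φ.symm ⟨y, hy⟩, (φ.symm ⟨y, hy⟩).2, by simp⟩⟩
    rintro ⟨x, hx, rfl⟩
    simp [dif_pos hx]

lemma Set.minimal_iff_subset_encard_eq {α : Type*} {P : Set α → Prop} {S C : Set α} {n : ℕ∞}
    (hn : n ≠ ⊤)
    (hP : ∀ X, P X → X ⊆ S ∧ n ≤ X.encard) (hS : ∀ X ⊆ S, X.encard = n → P X) :
    Minimal P C ↔ C ⊆ S ∧ C.encard = n := by
  constructor
  · rintro ⟨hC, hmin⟩
    obtain ⟨C', hC'C, hC'⟩ := exists_subset_encard_eq (hP C hC).2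
    have hCC' : C ⊆ C' := hmin (hS C' (hC'C.trans (hP C hC).1) hC') hC'C
    exact ⟨(hP C hC).1, subset_antisymm hCC' hC'C ▸ hC'⟩
  · rintro ⟨hCS, hCn⟩
    refine ⟨hS C hCS hCn, fun Y hY hYC => ?_⟩
    have hCfin : C.Finite := encard_ne_top_iff.1 (hCn ▸ hn)
    exact (hCfin.eq_of_subset_of_encard_le' hYC (hCn.le.trans (hP Y hY).2)).symm.subset

namespace Matroid

variable {α : Type*}

noncomputable def unifOn (E : Set α) (k : ℕ) : Matroid α :=
  (IndepMatroid.ofBddAugment E (fun I => I ⊆ E ∧ I.encard ≤ k)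
    ⟨empty_subset _, by simp⟩
    (fun I J hJ hIJ => ⟨hIJ.trans hJ.1, (encard_mono hIJ).trans hJ.2⟩)
    (fun I J hI hJ hIJ => by
      obtain ⟨e, heJ, heI⟩ := not_subset.1 (fun hss => hIJ.not_ge (encard_mono hss))
      refine ⟨e, heJ, heI, insert_subset (hJ.1 heJ) hI.1, ?_⟩
      rw [encard_insert_of_notMem heI]
      exact le_trans ((ENat.add_one_le_iff (hI.2.trans_lt (by simp)).ne).2 hIJ) hJ.2)
    ⟨k, fun I hI => hI.2⟩
    (fun I hI => hI.1)).matroid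

@[simp] lemma unifOn_ground (E : Set α) (k : ℕ) : (unifOn E k).E = E := rfl

@[simp] lemma unifOn_indep_iff {E I : Set α} {k : ℕ} :
    (unifOn E k).Indep I ↔ I ⊆ E ∧ I.encard ≤ k := Iff.rfl

lemma unifOn_dep_iff {E D : Set α} {k : ℕ} :
    (unifOn E k).Dep D ↔ D ⊆ E ∧ (k : ℕ∞) < D.encard := by
  rw [dep_iff, unifOn_indep_iff, unifOn_ground, not_and, not_le]
  exact ⟨fun h => ⟨h.2, h.1 h.2⟩, fun h => ⟨fun _ => h.2, h.1⟩⟩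

lemma unifOn_circuit'_iff {E C : Set α} {k : ℕ} :
    (unifOn E k).Circuit' C ↔ C ⊆ E ∧ C.encard = (k : ℕ∞) + 1 := by
  refine minimal_iff_subset_encard_eq (by simp) (fun X hX => ?_) (fun X hXE hX => ?_)
  · obtain ⟨hXE, hkX⟩ := unifOn_dep_iff.1 hX
    exact ⟨hXE, Order.add_one_le_of_lt hkX⟩
  · exact unifOn_dep_iff.2 ⟨hXE, by rw [hX]; exact_mod_cast k.lt_succ_self⟩

/-- Circuits determine a matroid, as every dependent set contains one (`Matroid.ext_isCircuit`). -/
lemma eq_unifOn_of_circuit'_iff {M : Matroid α} {E : Set α} {k : ℕ} (hME : M.E = E)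
    (hMC : ∀ C, M.Circuit' C ↔ C ⊆ E ∧ C.encard = (k : ℕ∞) + 1) : M = unifOn E k :=
  ext_isCircuit hME fun C _ => (hMC C).trans unifOn_circuit'_iff.symm

lemma map_unifOn {D : Set α} {g : α → α} (hg : InjOn g D) (k : ℕ) :
    (unifOn D k).map g hg = unifOn (g '' D) k := by
  refine ext_indep rfl fun I _ => map_indep_iff.trans ?_
  rw [unifOn_indep_iff]
  constructor
  · rintro ⟨I₀, ⟨hI₀D, hI₀k⟩, rfl⟩
    exact ⟨image_mono hI₀D, (hg.mono hI₀D).encard_image ▸ hI₀k⟩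
  · rintro ⟨hID, hIk⟩
    refine ⟨D ∩ g ⁻¹' I, ⟨inter_subset_left, ?_⟩, ?_⟩
    · rwa [← (hg.mono inter_subset_left).encard_image, image_inter_preimage,
        inter_eq_right.2 hID]
    · rw [image_inter_preimage, inter_eq_right.2 hID]

lemma unifOn_restrict {D E : Set α} (hDE : D ⊆ E) (k : ℕ) : unifOn E k ↾ D = unifOn D k :=
  ext_indep rfl fun I _ => by
    simp only [restrict_indep_iff, unifOn_indep_iff]
    exact ⟨fun h => ⟨h.2, h.1.2⟩, fun h => ⟨⟨h.1.trans hDE, h.2⟩, h.1⟩⟩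

lemma unifOn_isBase_of_encard_eq {E B : Set α} {k : ℕ} (hBE : B ⊆ E) (hB : B.encard = k) :
    (unifOn E k).IsBase B := by
  refine isBase_iff_maximal_indep.2 ⟨⟨hBE, hB.le⟩, fun J hJ hBJ => ?_⟩
  exact ((finite_of_encard_eq_coe hB).eq_of_subset_of_encard_le hBJ
    (hJ.2.trans hB.ge)).ge

lemma not_unifOn_succ_circuit'_singleton (E : Set α) (k : ℕ) (e : α) :
    ¬ (unifOn E (k + 1)).Circuit' {e} := by
  rw [unifOn_circuit'_iff, encard_singleton]
  rintro ⟨-, h⟩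
  norm_cast at h
  omega

lemma unifOn_succ_isContractionBy {E : Set α} {e : α} (he : e ∈ E) (k : ℕ) :
    (unifOn E (k + 1)).IsContractionBy {e} (unifOn (E \ {e}) k) := by
  refine ⟨rfl, fun C => unifOn_circuit'_iff.trans
    (minimal_iff_subset_encard_eq (by simp) ?_ ?_).symm⟩
  · rintro X ⟨-, C₀, hC₀, rfl⟩
    obtain ⟨hC₀E, hC₀k⟩ := unifOn_circuit'_iff.1 hC₀
    refine ⟨sdiff_subset_sdiff_left hC₀E, ?_⟩
    have hC₀le := hC₀k ▸ encard_le_encard_sdiff_add_encard C₀ {e}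
    rw [encard_singleton] at hC₀le
    push_cast at hC₀le
    exact (ENat.add_le_add_iff_right ENat.one_ne_top).1 hC₀le
  · intro X hXE hXk
    have heX : e ∉ X := fun h => (hXE h).2 rfl
    refine ⟨nonempty_of_encard_ne_zero (by simp [hXk]), insert e X, ?_, ?_⟩
    · rw [unifOn_circuit'_iff, encard_insert_of_notMem heX, hXk]
      exact ⟨insert_subset he (hXE.trans sdiff_subset), by push_cast; ring⟩
    · rw [insert_sdiff_self_of_notMem heX]

lemma apply_unifOn_eq_of_mk_eq {G : Type*} (f : Matroid α → G)
    (hiso : ∀ (M : Matroid α) (g : α → α) (hg : InjOn g M.E), f (M.map g hg) = f M)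
    {D E : Set α} (h : #D = #E) (k : ℕ) : f (unifOn D k) = f (unifOn E k) := by
  obtain ⟨g, hg, rfl⟩ := exists_injOn_image_eq_of_mk_eq h
  rw [← map_unifOn hg]
  exact (hiso _ g hg).symm

end Matroid

open Matroid

theorem tutte_grothendieck_vanishes_general {α G : Type*} [AddCommGroup G] (f : Matroid α → G)
    (hiso : ∀ (M : Matroid α) (g : α → α) (hg : Set.InjOn g M.E), f (M.map g hg) = f M)
    (hdc : ∀ (M : Matroid α) (e : α), e ∈ M.E →
      ¬ M.Circuit' {e} → (∃ B, M.IsBase B ∧ e ∉ B) →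
      ∀ N, M.IsContractionBy {e} N → f M = f (M ↾ (M.E \ {e})) + f N)
    (E : Set α) (hE : E.Infinite) (r : ℕ)
    (U : Matroid α) (hUE : U.E = E)
    (hUC : ∀ C, U.Circuit' C ↔ (C ⊆ E ∧ C.encard = (r : ℕ∞) + 1)) :
    f U = 0 := by
  obtain ⟨e, he⟩ := hE.nonempty
  have hiso_sdiff (k : ℕ) : f (unifOn (E \ {e}) k) = f (unifOn E k) :=
    apply_unifOn_eq_of_mk_eq f hiso (Cardinal.mk_sdiff_singleton_of_infinite hE e) k
  obtain ⟨B, hBE, hB⟩ := exists_subset_encard_eq (s := E \ {e}) (k := (r + 1 : ℕ))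
    (by simp [(hE.sdiff (finite_singleton e)).encard_eq])
  have hdel := hdc (unifOn E (r + 1)) e he (not_unifOn_succ_circuit'_singleton E r e)
    ⟨B, unifOn_isBase_of_encard_eq (hBE.trans sdiff_subset) hB, fun heB => (hBE heB).2 rfl⟩
    (unifOn (E \ {e}) r) (unifOn_succ_isContractionBy he r)
  rw [unifOn_ground, unifOn_restrict sdiff_subset, hiso_sdiff (r + 1), left_eq_add] at hdel
  rw [eq_unifOn_of_circuit'_iff hUE hUC, ← hiso_sdiff r, hdel]

/-- Let `G` be an additive commutative group and `f` a `G`-valued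
function on matroids on (subsets of) a fixed type `α` such that (i) `f` is invariant under
matroid isomorphism and (ii) `f M = f (M \ e) + f (M / e)` whenever `e ∈ M.E` is neither a
loop nor a coloop.  If `E` is infinite and `U` is the finitary uniform matroid of rank `r`
on `E` (circuits: the `(r+1)`-element subsets of `E`), then `f U = 0`. -/
theorem tutte_grothendieck_vanishes {α G : Type*} [AddCommGroup G] (f : Matroid α → G)
    (hiso : ∀ (M : Matroid α) (g : α → α) (hg : Set.InjOn g M.E), f (M.map g hg) = f M)
    (hdc : ∀ (M : Matroid α) (e : α), e ∈ M.E →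
      ¬ M.Circuit' {e} → (∃ B, M.IsBase B ∧ e ∉ B) →
      ∀ N, M.IsContractionBy {e} N → f M = f (M ↾ (M.E \ {e})) + f N)
    (E : Set α) (hE : E.Infinite) (r : ℕ)
    (U : Matroid α) (hUE : U.E = E) (hUfin : U.Finitary)
    (hUC : ∀ C, U.Circuit' C ↔ (C ⊆ E ∧ C.encard = (r : ℕ∞) + 1)) :
    f U = 0 :=
  tutte_grothendieck_vanishes_general f hiso hdc E hE r U hUE hUC
end
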